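/- Uniform density bound for multi-measurement posteriors: Assume ρ satisfies (N.1)–(N.3), let μ_prior be a Borel probability measure on a separable Banach space X, and let L_1, …, L_j : X → ℝ^d be Borel measurable with ‖L_k‖_{L²(μ_prior)} < ∞ for each k. There exists a constant C > 0, depending only on ρ, such that for all y_{1:j} = (y_1,…,y_j) ∈ (ℝ^d)^j: Z_j(y_{1:j}) ≥ C^{−j} exp( −Σ_{k=1}^j |y_k|_Γ² − Σ_{k=1}^j ‖L_k‖²_{L²(μ_prior)} ), and for every ū ∈ X: Π_{k=1}^j ρ(y_k − L_k(ū)) / Z_j(y_{1:j}) ≤ C^{j} exp( Σ_{k=1}^j |y_k|_Γ² + Σ_{k=1}^j ‖L_k‖²_{L²(μ_prior)} ). -/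

import Mathlib

open MeasureTheory
open scoped BigOperators ENNReal Matrix

noncomputable section

/-- The Γ-weighted norm `|y|_Γ = sqrt ⟨y, Γ⁻¹ y⟩` on `ℝ^d`. -/
def gammaNorm {d : ℕ} (Γ : Matrix (Fin d) (Fin d) ℝ) (y : Fin d → ℝ) : ℝ :=
  Real.sqrt (y ⬝ᵥ (Γ⁻¹).mulVec y)

/-- A noise density satisfying (N.1)–(N.3). -/
structure IsNoiseDensity {d : ℕ} (Γ : Matrix (Fin d) (Fin d) ℝ) (ρ : (Fin d → ℝ) → ℝ)
    (Lρ Cb Ct : ℝ) : Prop where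
  Lρ_pos : 0 < Lρ
  Cb_pos : 0 < Cb
  Ct_pos : 0 < Ct
  pos : ∀ y, 0 < ρ y
  lip : ∀ y y', |ρ y - ρ y'| ≤ Lρ * gammaNorm Γ (y - y')
  bdd : ∀ y, ρ y ≤ Cb
  tail : ∀ y, Ct⁻¹ * Real.exp (-(1 / 2) * (gammaNorm Γ y) ^ 2) ≤ ρ y

/-- Normalization constant `Z_j(y_{1:j}) = ∫ Π_k ρ(y_k − L_k(ū)) dμ_prior`. -/
def multiZ {X : Type*} [MeasurableSpace X] {d j : ℕ} (μp : Measure X)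
    (ρ : (Fin d → ℝ) → ℝ) (L : Fin j → X → Fin d → ℝ) (y : Fin j → Fin d → ℝ) : ℝ :=
  ∫ u, ∏ k, ρ (y k - L k u) ∂μp

/-!
By the parallelogram law `|y - v|_Γ² ≤ 2|y|_Γ² + 2|v|_Γ²`, so the Gaussian tail bound (N.3) gives
`ρ (y_k - L_k ū) ≥ C_t⁻¹ exp (-|y_k|_Γ² - |L_k ū|_Γ²)`. Multiplying over `k`, integrating against
the prior and applying Jensen's inequality to `exp (-∑ k, |L_k ū|_Γ²)` yields
`Z_j ≥ C_t^{-j} exp (-∑ |y_k|_Γ² - ∑ ‖L_k‖²)`. The upper bound on the posterior density then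
follows from `ρ ≤ C_b`, with `C = C_t (C_b + 1)`.
-/

variable {d : ℕ} {Γ : Matrix (Fin d) (Fin d) ℝ}

lemma gammaNorm_sq (hΓ : Γ.PosDef) (x : Fin d → ℝ) :
    gammaNorm Γ x ^ 2 = x ⬝ᵥ (Γ⁻¹).mulVec x :=
  Real.sq_sqrt (by simpa using hΓ.inv.posSemidef.dotProduct_mulVec_nonneg x)

lemma gammaNorm_sub_sq_le (hΓ : Γ.PosDef) (a b : Fin d → ℝ) :
    gammaNorm Γ (a - b) ^ 2 ≤ 2 * gammaNorm Γ a ^ 2 + 2 * gammaNorm Γ b ^ 2 := by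
  have hsum := sq_nonneg (gammaNorm Γ (a + b))
  simp only [gammaNorm_sq hΓ, Matrix.mulVec_add, Matrix.mulVec_sub, sub_dotProduct,
    add_dotProduct, dotProduct_add, dotProduct_sub] at *
  linarith

lemma continuous_gammaNorm : Continuous (gammaNorm Γ) := by
  unfold gammaNorm
  fun_prop

lemma Real.exp_integral_le_integral_exp {α : Type*} [MeasurableSpace α] {μ : Measure α}
    [IsProbabilityMeasure μ] {f : α → ℝ} (hf : Integrable f μ)
    (hexp : Integrable (fun x => Real.exp (f x)) μ) :
    Real.exp (∫ x, f x ∂μ) ≤ ∫ x, Real.exp (f x) ∂μ :=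
  convexOn_exp.map_integral_le Real.continuous_exp.continuousOn isClosed_univ
    (.of_forall fun _ => Set.mem_univ _) hf hexp

namespace IsNoiseDensity

variable {ρ : (Fin d → ℝ) → ℝ} {Lρ Cb Ct : ℝ}

protected lemma continuous (hρ : IsNoiseDensity Γ ρ Lρ Cb Ct) : Continuous ρ := by
  refine continuous_iff_continuousAt.2 fun y₀ => tendsto_iff_norm_sub_tendsto_zero.2 ?_
  have hlim : Filter.Tendsto (fun y => Lρ * gammaNorm Γ (y - y₀)) (nhds y₀) (nhds 0) := by
    have hcont : Continuous fun y => Lρ * gammaNorm Γ (y - y₀) :=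
      continuous_const.mul (continuous_gammaNorm.comp (continuous_sub_right y₀))
    simpa [gammaNorm] using hcont.tendsto y₀
  exact squeeze_zero (fun _ => norm_nonneg _) (fun y => hρ.lip y y₀) hlim

lemma prod_le {j : ℕ} (hρ : IsNoiseDensity Γ ρ Lρ Cb Ct) (z : Fin j → Fin d → ℝ) :
    ∏ k, ρ (z k) ≤ Cb ^ j := by
  calc ∏ k, ρ (z k) ≤ ∏ _k : Fin j, Cb :=
        Finset.prod_le_prod (fun k _ => (hρ.pos (z k)).le) (fun k _ => hρ.bdd (z k))
    _ = Cb ^ j := by simp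

lemma inv_mul_exp_le_sub (hΓ : Γ.PosDef) (hρ : IsNoiseDensity Γ ρ Lρ Cb Ct)
    (y v : Fin d → ℝ) :
    Ct⁻¹ * Real.exp (-(gammaNorm Γ y ^ 2 + gammaNorm Γ v ^ 2)) ≤ ρ (y - v) := by
  refine le_trans ?_ (hρ.tail (y - v))
  have := hρ.Ct_pos
  gcongr
  linarith [gammaNorm_sub_sq_le hΓ y v]

lemma inv_pow_mul_exp_le_prod_sub {j : ℕ} (hΓ : Γ.PosDef) (hρ : IsNoiseDensity Γ ρ Lρ Cb Ct)
    (y v : Fin j → Fin d → ℝ) :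
    Ct⁻¹ ^ j * Real.exp (-(∑ k, gammaNorm Γ (y k) ^ 2) - ∑ k, gammaNorm Γ (v k) ^ 2)
      ≤ ∏ k, ρ (y k - v k) := by
  have hsplit : Ct⁻¹ ^ j * Real.exp (-(∑ k, gammaNorm Γ (y k) ^ 2) - ∑ k, gammaNorm Γ (v k) ^ 2)
      = ∏ k, Ct⁻¹ * Real.exp (-(gammaNorm Γ (y k) ^ 2 + gammaNorm Γ (v k) ^ 2)) := by
    rw [Finset.prod_mul_distrib, Finset.prod_const, Finset.card_univ, Fintype.card_fin,
      ← Real.exp_sum, Finset.sum_neg_distrib, Finset.sum_add_distrib, neg_add, sub_eq_add_neg]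
  rw [hsplit]
  exact Finset.prod_le_prod (fun k _ => by have := hρ.Ct_pos; positivity)
    (fun k _ => hρ.inv_mul_exp_le_sub hΓ (y k) (v k))

variable {X : Type*} [MeasurableSpace X] {μ : Measure X} {j : ℕ} {L : Fin j → X → Fin d → ℝ}

lemma integrable_prod_sub [IsFiniteMeasure μ] (hρ : IsNoiseDensity Γ ρ Lρ Cb Ct)
    (hL : ∀ k, Measurable (L k)) (y : Fin j → Fin d → ℝ) :
    Integrable (fun u => ∏ k, ρ (y k - L k u)) μ := by
  refine .of_bound (Finset.measurable_prod _ fun k _ =>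
    hρ.continuous.measurable.comp (measurable_const.sub (hL k))).aestronglyMeasurable (Cb ^ j)
    (.of_forall fun u => ?_)
  rw [Real.norm_of_nonneg (Finset.prod_nonneg fun k _ => (hρ.pos _).le)]
  exact hρ.prod_le _

lemma inv_pow_mul_exp_le_multiZ [IsProbabilityMeasure μ] (hΓ : Γ.PosDef)
    (hρ : IsNoiseDensity Γ ρ Lρ Cb Ct) (hLm : ∀ k, Measurable (L k))
    (hLi : ∀ k, Integrable (fun u => gammaNorm Γ (L k u) ^ 2) μ) (y : Fin j → Fin d → ℝ) :
    Ct⁻¹ ^ j * Real.exp (-(∑ k, gammaNorm Γ (y k) ^ 2) - ∑ k, ∫ u, gammaNorm Γ (L k u) ^ 2 ∂μ)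
      ≤ multiZ μ ρ L y := by
  have hCt := hρ.Ct_pos
  set E := ∑ k, gammaNorm Γ (y k) ^ 2
  set S : X → ℝ := fun u => ∑ k, gammaNorm Γ (L k u) ^ 2
  have hS : Integrable S μ := integrable_finsetSum _ fun k _ => hLi k
  have hexpS : Integrable (fun u => Real.exp (-S u)) μ := by
    refine .of_bound (Real.continuous_exp.comp_aestronglyMeasurable hS.neg.1) 1
      (.of_forall fun u => ?_)
    rw [Real.norm_of_nonneg (Real.exp_nonneg _), Real.exp_le_one_iff, neg_nonpos]
    exact Finset.sum_nonneg fun k _ => sq_nonneg _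
  calc Ct⁻¹ ^ j * Real.exp (-E - ∑ k, ∫ u, gammaNorm Γ (L k u) ^ 2 ∂μ)
      = Ct⁻¹ ^ j * Real.exp (-E) * Real.exp (∫ u, -S u ∂μ) := by
        rw [integral_neg, integral_finsetSum _ fun k _ => hLi k, mul_assoc, ← Real.exp_add,
          sub_eq_add_neg]
    _ ≤ Ct⁻¹ ^ j * Real.exp (-E) * ∫ u, Real.exp (-S u) ∂μ := by
        gcongr
        exact Real.exp_integral_le_integral_exp hS.neg hexpS
    _ = ∫ u, Ct⁻¹ ^ j * Real.exp (-E) * Real.exp (-S u) ∂μ := (integral_const_mul _ _).symm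
    _ ≤ multiZ μ ρ L y := by
        refine integral_mono (hexpS.const_mul _) (hρ.integrable_prod_sub hLm y) fun u => ?_
        rw [mul_assoc, ← Real.exp_add, ← sub_eq_add_neg]
        exact hρ.inv_pow_mul_exp_le_prod_sub hΓ y (L · u)

end IsNoiseDensity

theorem multi_measurement_density_bound_general
    {X : Type*} [MeasurableSpace X]
    {d : ℕ}
    (Γ : Matrix (Fin d) (Fin d) ℝ) (hΓ : Γ.PosDef)
    (ρ : (Fin d → ℝ) → ℝ) (Lρ Cb Ct : ℝ) (hρ : IsNoiseDensity Γ ρ Lρ Cb Ct) :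
    ∃ C > 0, ∀ (j : ℕ) (μp : Measure X), IsProbabilityMeasure μp →
      ∀ L : Fin j → X → Fin d → ℝ, (∀ k, Measurable (L k)) →
        (∀ k, Integrable (fun u => (gammaNorm Γ (L k u)) ^ 2) μp) →
      ∀ y : Fin j → Fin d → ℝ,
        (C ^ j)⁻¹ *
            Real.exp (-(∑ k, (gammaNorm Γ (y k)) ^ 2)
              - ∑ k, ∫ u, (gammaNorm Γ (L k u)) ^ 2 ∂μp)
          ≤ multiZ μp ρ L y ∧
        ∀ u : X,
          (∏ k, ρ (y k - L k u)) / multiZ μp ρ L y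
            ≤ C ^ j *
              Real.exp ((∑ k, (gammaNorm Γ (y k)) ^ 2)
                + ∑ k, ∫ v, (gammaNorm Γ (L k v)) ^ 2 ∂μp) := by
  have hCb := hρ.Cb_pos
  have hCt := hρ.Ct_pos
  refine ⟨Ct * (Cb + 1), by positivity, fun j μp _ L hLm hLi y => ?_⟩
  have hZ := hρ.inv_pow_mul_exp_le_multiZ hΓ hLm hLi y
  rw [← neg_add'] at hZ ⊢
  set A := ∑ k, gammaNorm Γ (y k) ^ 2 + ∑ k, ∫ v, gammaNorm Γ (L k v) ^ 2 ∂μp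
  refine ⟨?_, fun u => ?_⟩
  · calc (((Ct * (Cb + 1)) ^ j)⁻¹ * Real.exp (-A)) ≤ Ct⁻¹ ^ j * Real.exp (-A) := by
          rw [← inv_pow]; gcongr; nlinarith
      _ ≤ multiZ μp ρ L y := hZ
  · calc (∏ k, ρ (y k - L k u)) / multiZ μp ρ L y
        ≤ Cb ^ j / (Ct⁻¹ ^ j * Real.exp (-A)) :=
          div_le_div₀ (by positivity) (hρ.prod_le _) (by positivity) hZ
      _ = (Ct * Cb) ^ j * Real.exp A := by
          rw [Real.exp_neg, inv_pow]; field_simp; ring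
      _ ≤ (Ct * (Cb + 1)) ^ j * Real.exp A := by gcongr; linarith

/-- **Uniform density bound for multi-measurement Bayesian posteriors**, with a
constant depending only on the noise density `ρ`. -/
theorem multi_measurement_density_bound
    {X : Type*} [NormedAddCommGroup X] [NormedSpace ℝ X] [CompleteSpace X]
    [TopologicalSpace.SeparableSpace X] [MeasurableSpace X] [BorelSpace X]
    {d : ℕ}
    (Γ : Matrix (Fin d) (Fin d) ℝ) (hΓ : Γ.PosDef)
    (ρ : (Fin d → ℝ) → ℝ) (Lρ Cb Ct : ℝ) (hρ : IsNoiseDensity Γ ρ Lρ Cb Ct) :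
    ∃ C > 0, ∀ (j : ℕ) (μp : Measure X), IsProbabilityMeasure μp →
      ∀ L : Fin j → X → Fin d → ℝ, (∀ k, Measurable (L k)) →
        (∀ k, Integrable (fun u => (gammaNorm Γ (L k u)) ^ 2) μp) →
      ∀ y : Fin j → Fin d → ℝ,
        (C ^ j)⁻¹ *
            Real.exp (-(∑ k, (gammaNorm Γ (y k)) ^ 2)
              - ∑ k, ∫ u, (gammaNorm Γ (L k u)) ^ 2 ∂μp)
          ≤ multiZ μp ρ L y ∧
        ∀ u : X,
          (∏ k, ρ (y k - L k u)) / multiZ μp ρ L y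
            ≤ C ^ j *
              Real.exp ((∑ k, (gammaNorm Γ (y k)) ^ 2)
                + ∑ k, ∫ v, (gammaNorm Γ (L k v)) ^ 2 ∂μp) :=
  multi_measurement_density_bound_general Γ hΓ ρ Lρ Cb Ct hρ
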